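/- Let ρ = (1,0,0) be the Weyl vector in II_{1,25} = U ⊕ Λ (Λ the Leech lattice). The map sending λ ∈ Λ to r = (−1 − ⟨λ,λ⟩/2, 1, λ) is a bijection from Λ onto the set of Leech roots, i.e. onto the set of vectors r ∈ II_{1,25} with ⟨r,r⟩ = −2 and ⟨r,ρ⟩ = 1; moreover if r, r′ correspond to λ, λ′ then ⟨r−r′, r−r′⟩ = ⟨λ−λ′, λ−λ′⟩. -/
import Mathlib


/-- The bilinear pairing on `II₁,₂₅ = U ⊕ Λ`, where a vector is written `(m, n, λ)` and
`⟨(m,n,λ), (m',n',λ')⟩ = mn' + m'n + B λ λ'`. -/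
def pairII {Λ : Type*} (B : Λ → Λ → ℤ) (v w : ℤ × ℤ × Λ) : ℤ :=
  v.1 * w.2.1 + w.1 * v.2.1 + B v.2.2 w.2.2

/-- The map `λ ↦ (−1 − ⟨λ,λ⟩/2, 1, λ)` from the Leech lattice to `II₁,₂₅ = U ⊕ Λ`. -/
def leechRoot {Λ : Type*} (B : Λ → Λ → ℤ) (l : Λ) : ℤ × ℤ × Λ :=
  (-1 - B l l / 2, 1, l)

/-- Let `ρ = (1,0,0)` be the Weyl vector in `II₁,₂₅ = U ⊕ Λ` (`Λ` the Leech lattice, an even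
lattice).  The map `λ ↦ (−1 − ⟨λ,λ⟩/2, 1, λ)` is a bijection from `Λ` onto the set of Leech
roots, i.e. vectors `r` with `⟨r,r⟩ = −2` and `⟨r,ρ⟩ = 1`; moreover if `r, r'` correspond to
`λ, λ'` then `⟨r−r', r−r'⟩ = ⟨λ−λ', λ−λ'⟩`. -/
theorem leech_root_bijection {Λ : Type*} [AddCommGroup Λ] (B : Λ → Λ → ℤ)
    (hsym : ∀ x y, B x y = B y x)
    (haddl : ∀ x x' y, B (x + x') y = B x y + B x' y)
    (heven : ∀ x, 2 ∣ B x x) :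
    (∀ l : Λ, pairII B (leechRoot B l) (leechRoot B l) = -2 ∧
      pairII B (leechRoot B l) (1, 0, 0) = 1) ∧
    Function.Injective (leechRoot B) ∧
    (∀ r : ℤ × ℤ × Λ, pairII B r r = -2 → pairII B r (1, 0, 0) = 1 →
      ∃ l : Λ, leechRoot B l = r) ∧
    (∀ l l' : Λ, pairII B (leechRoot B l - leechRoot B l')
        (leechRoot B l - leechRoot B l') = B (l - l') (l - l')) := by
  have hzero : ∀ y : Λ, B 0 y = 0 := by
    intro y
    have := haddl 0 0 y
    simp at this
    linarith
  have hzero' : ∀ x : Λ, B x 0 = 0 := fun x => by rw [hsym]; exact hzero x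
  refine ⟨?_, ?_, ?_, ?_⟩
  · intro l
    obtain ⟨k, hk⟩ := heven l
    constructor
    · simp [pairII, leechRoot, hk]
      ring
    · simp [pairII, leechRoot, hzero']
  · intro l l' h
    exact congrArg (fun p => p.2.2) h
  · rintro ⟨m, n, l⟩ h1 h2
    simp [pairII, hzero'] at h2
    subst h2
    obtain ⟨k, hk⟩ := heven l
    simp [pairII, hk] at h1
    refine ⟨l, ?_⟩
    simp [leechRoot, hk]
    omega
  · intro l l'
    simp [pairII, leechRoot]
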